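/- Let N ≥ 1, let 1 ≤ q < 2, let Ω ⊆ ℝ^N be an open set and let w be a classical Lane–Emden solution on Ω with w(x) ≤ M for all x ∈ Ω, where M > 0. Let δ > 0 and let V : Ω → ℝ be measurable and satisfy (1/δ)·(1/δ − 1)·|∇w(x)/w(x)|² ≤ V(x) ≤ 0 for almost every x ∈ Ω. Then for every smooth function φ : ℝ^N → ℝ with compact support contained in Ω one has ∫_Ω |∇φ|² dx + ∫_Ω V φ² dx ≥ (1/δ)·M^{q−2}·∫_Ω φ² dx. -/

import Mathlib

open MeasureTheory

/-- The Laplacian of a function on `ℝ^N`, computed as the sum of the second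
partial derivatives along the coordinate directions. -/
noncomputable def lap {N : ℕ} (f : EuclideanSpace ℝ (Fin N) → ℝ)
    (x : EuclideanSpace ℝ (Fin N)) : ℝ :=
  ∑ i : Fin N, fderiv ℝ (fun y => fderiv ℝ f y (EuclideanSpace.single i 1)) x
    (EuclideanSpace.single i 1)

/-- A classical Lane–Emden solution on an open set `Ω ⊆ ℝ^N`: twice continuously
differentiable on `Ω`, positive on `Ω`, and satisfying `-Δw = w^(q-1)` on `Ω`. -/
def IsLaneEmdenSolution {N : ℕ} (q : ℝ) (Ω : Set (EuclideanSpace ℝ (Fin N)))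
    (w : EuclideanSpace ℝ (Fin N) → ℝ) : Prop :=
  ContDiffOn ℝ 2 w Ω ∧ (∀ x ∈ Ω, 0 < w x) ∧ ∀ x ∈ Ω, -lap w x = w x ^ (q - 1)


/-!
Ground-state substitution. Put `α = 1/δ` and test Green's identity
`∫ ⟪∇g, ∇w⟫ = -∫ g Δw` with `g = φ²/w`, which is `C¹` with compact support in `Ω`. Since
`-Δw / w = w^(q-2) ≥ M^(q-2)`, this gives `α ∫ ⟪∇(φ²/w), ∇w⟫ ≥ α M^(q-2) ∫ φ²`. Pointwise,
Picone's identity `|∇φ|² - α ⟪∇(φ²/w), ∇w⟫ + α(α-1) φ² |∇w/w|² = |∇φ - α φ ∇w/w|² ≥ 0`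
together with the lower bound on `V` gives `α ⟪∇(φ²/w), ∇w⟫ ≤ |∇φ|² + V φ²`.
-/

open Function InnerProductSpace

theorem ContDiffOn.contDiff_of_tsupport_subset {𝕜 E F : Type*} [NontriviallyNormedField 𝕜]
    [NormedAddCommGroup E] [NormedSpace 𝕜 E] [NormedAddCommGroup F] [NormedSpace 𝕜 F]
    {n : WithTop ℕ∞} {f : E → F} {s : Set E} (hs : IsOpen s) (hf : ContDiffOn 𝕜 n f s)
    (hfs : tsupport f ⊆ s) : ContDiff 𝕜 n f := by
  refine contDiff_iff_contDiffAt.mpr fun x => ?_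
  by_cases hx : x ∈ s
  · exact hf.contDiffAt (hs.mem_nhds hx)
  · exact contDiffAt_const.congr_of_eventuallyEq
      (notMem_tsupport_iff_eventuallyEq.mp fun h => hx (hfs h))

theorem ContDiffOn.contDiffOn_fderiv_apply {𝕜 E F : Type*} [NontriviallyNormedField 𝕜]
    [NormedAddCommGroup E] [NormedSpace 𝕜 E] [NormedAddCommGroup F] [NormedSpace 𝕜 F]
    {m n : WithTop ℕ∞} {f : E → F} {s : Set E} (hs : IsOpen s) (hf : ContDiffOn 𝕜 n f s)
    (hmn : m + 1 ≤ n) (v : E) : ContDiffOn 𝕜 m (fun y => fderiv 𝕜 f y v) s :=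
  (hf.fderiv_of_isOpen hs hmn).clm_apply contDiffOn_const

theorem ContDiffOn.continuousOn_gradient {E : Type*} [NormedAddCommGroup E]
    [InnerProductSpace ℝ E] [CompleteSpace E] {f : E → ℝ} {s : Set E} (hs : IsOpen s)
    {n : WithTop ℕ∞} (hf : ContDiffOn ℝ n f s) (hn : 1 ≤ n) : ContinuousOn (gradient f) s :=
  (toDual ℝ E).symm.continuous.comp_continuousOn (hf.continuousOn_fderiv_of_isOpen hs hn)

theorem ContinuousOn.integrable_of_support_subset {X E : Type*} [TopologicalSpace X] [T2Space X]
    [MeasurableSpace X] [OpensMeasurableSpace X] {μ : Measure X} [IsFiniteMeasureOnCompacts μ]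
    [NormedAddCommGroup E] {f : X → E} {s K : Set X} (hf : ContinuousOn f s) (hK : IsCompact K)
    (hKs : K ⊆ s) (hfK : support f ⊆ K) : Integrable f μ :=
  (integrableOn_iff_integrable_of_support_subset hfK).mp ((hf.mono hKs).integrableOn_compact hK)

theorem ContDiff.integrable_norm_gradient_sq {E : Type*} [NormedAddCommGroup E]
    [InnerProductSpace ℝ E] [CompleteSpace E] [MeasurableSpace E] [OpensMeasurableSpace E]
    {μ : Measure E} [IsFiniteMeasureOnCompacts μ] {φ : E → ℝ} (hφ : ContDiff ℝ 1 φ)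
    (hφc : HasCompactSupport φ) : Integrable (fun x => ‖gradient φ x‖ ^ 2) μ := by
  have hcont := continuousOn_univ.mp (hφ.contDiffOn.continuousOn_gradient isOpen_univ le_rfl)
  refine (hcont.norm.pow 2).integrable_of_hasCompactSupport (hφc.mono' fun x hx => ?_)
  by_contra hxφ
  simp [gradient, fderiv_of_notMem_tsupport (𝕜 := ℝ) hxφ] at hx

theorem picone_inequality {E : Type*} [NormedAddCommGroup E] [InnerProductSpace ℝ E]
    (a u : E) (p α : ℝ) :
    α * (2 * p * inner ℝ a u - p ^ 2 * ‖u‖ ^ 2)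
      ≤ ‖a‖ ^ 2 + α * (α - 1) * p ^ 2 * ‖u‖ ^ 2 := by
  have h := norm_sub_sq_real a ((α * p) • u)
  rw [inner_smul_right, norm_smul, Real.norm_eq_abs, mul_pow, sq_abs] at h
  nlinarith [sq_nonneg ‖a - (α * p) • u‖]

section SqDiv

variable {E : Type*} {φ w : E → ℝ}

theorem support_sq_div_subset : support (fun x => φ x ^ 2 / w x) ⊆ support φ :=
  fun x hx hφx => hx (by simp [hφx])

theorem tsupport_sq_div_subset [TopologicalSpace E] :
    tsupport (fun x => φ x ^ 2 / w x) ⊆ tsupport φ :=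
  closure_mono support_sq_div_subset

variable [NormedAddCommGroup E]

theorem ContDiff.sq_div_of_tsupport_subset [NormedSpace ℝ E] {Ω : Set E} (hΩ : IsOpen Ω)
    (hφ : ContDiff ℝ 1 φ) (hφΩ : tsupport φ ⊆ Ω) (hw : ContDiffOn ℝ 1 w Ω)
    (hw0 : ∀ x ∈ Ω, w x ≠ 0) : ContDiff ℝ 1 (fun x => φ x ^ 2 / w x) :=
  ((hφ.contDiffOn.pow 2).div hw hw0).contDiff_of_tsupport_subset hΩ
    (tsupport_sq_div_subset.trans hφΩ)

theorem fderiv_sq_div_apply [NormedSpace ℝ E] {x : E} (hφ : DifferentiableAt ℝ φ x)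
    (hw : DifferentiableAt ℝ w x) (hwx : w x ≠ 0) (v : E) :
    fderiv ℝ (fun y => φ y ^ 2 / w y) x v
      = 2 * φ x * fderiv ℝ φ x v / w x - φ x ^ 2 * fderiv ℝ w x v / w x ^ 2 := by
  have hsq : HasFDerivAt (fun y => φ y ^ 2) ((2 * φ x) • fderiv ℝ φ x) x := by
    simpa using hφ.hasFDerivAt.pow 2
  have h : HasFDerivAt (fun y => φ y ^ 2 * (w y)⁻¹)
      (φ x ^ 2 • (-(w x ^ 2)⁻¹ • fderiv ℝ w x) + (w x)⁻¹ • ((2 * φ x) • fderiv ℝ φ x)) x :=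
    hsq.mul ((hasDerivAt_inv hwx).comp_hasFDerivAt x hw.hasFDerivAt)
  simp only [div_eq_mul_inv, h.fderiv]
  simp only [neg_smul, smul_neg, add_apply, neg_apply, smul_apply, smul_eq_mul]
  field_simp
  ring

theorem mul_fderiv_sq_div_apply_gradient_le [InnerProductSpace ℝ E] [CompleteSpace E] {x : E}
    (hφ : DifferentiableAt ℝ φ x) (hw : DifferentiableAt ℝ w x) (hwx : 0 < w x) (α : ℝ) :
    α * fderiv ℝ (fun y => φ y ^ 2 / w y) x (gradient w x)
      ≤ ‖gradient φ x‖ ^ 2 + α * (α - 1) * (‖gradient w x‖ / w x) ^ 2 * φ x ^ 2 := by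
  have h := picone_inequality (gradient φ x) ((w x)⁻¹ • gradient w x) (φ x) α
  rw [inner_smul_right, norm_smul, norm_inv, Real.norm_of_nonneg hwx.le, inner_gradient_left]
    at h
  rw [fderiv_sq_div_apply hφ hw hwx.ne', ← inner_gradient_left (f := w),
    real_inner_self_eq_norm_sq]
  convert h using 1 <;> field_simp

end SqDiv

section IntegrationByParts

variable {E : Type*} [NormedAddCommGroup E] [NormedSpace ℝ E] [MeasurableSpace E]
  [BorelSpace E] {μ : Measure E} {Ω : Set E} {w g : E → ℝ}

theorem integrable_fderiv_apply_mul_fderiv_apply [IsFiniteMeasureOnCompacts μ] (hΩ : IsOpen Ω)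
    (hw : ContDiffOn ℝ 1 w Ω) (hg : ContDiff ℝ 1 g) (hgc : HasCompactSupport g)
    (hgΩ : tsupport g ⊆ Ω) (v : E) :
    Integrable (fun x => fderiv ℝ w x v * fderiv ℝ g x v) μ :=
  (((hw.continuousOn_fderiv_of_isOpen hΩ le_rfl).clm_apply continuousOn_const).mul
    ((hg.continuous_fderiv one_ne_zero).continuousOn.clm_apply continuousOn_const)
    ).integrable_of_support_subset hgc hgΩ ((support_mul_subset_right _ _).trans
      ((subset_tsupport _).trans (tsupport_fderiv_apply_subset ℝ v)))

theorem integrable_fderiv_fderiv_apply_mul [IsFiniteMeasureOnCompacts μ] (hΩ : IsOpen Ω)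
    (hw : ContDiffOn ℝ 2 w Ω) (hg : Continuous g) (hgc : HasCompactSupport g)
    (hgΩ : tsupport g ⊆ Ω) (v : E) :
    Integrable (fun x => fderiv ℝ (fun y => fderiv ℝ w y v) x v * g x) μ :=
  ((((hw.contDiffOn_fderiv_apply hΩ (m := 1) (by norm_num) v).continuousOn_fderiv_of_isOpen hΩ
    le_rfl).clm_apply continuousOn_const).mul hg.continuousOn).integrable_of_support_subset
    hgc hgΩ ((support_mul_subset_right _ _).trans (subset_tsupport g))

theorem integral_fderiv_apply_mul_fderiv_apply_eq_neg [FiniteDimensional ℝ E]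
    [μ.IsAddHaarMeasure] (hΩ : IsOpen Ω) (hw : ContDiffOn ℝ 2 w Ω) (hg : ContDiff ℝ 1 g)
    (hgc : HasCompactSupport g) (hgΩ : tsupport g ⊆ Ω) (v : E) :
    ∫ x, fderiv ℝ w x v * fderiv ℝ g x v ∂μ
      = -∫ x, fderiv ℝ (fun y => fderiv ℝ w y v) x v * g x ∂μ := by
  have hpart := hw.contDiffOn_fderiv_apply hΩ (m := 1) (by norm_num) v
  refine integral_mul_fderiv_eq_neg_fderiv_mul_of_integrable
    (integrable_fderiv_fderiv_apply_mul hΩ hw hg.continuous hgc hgΩ v)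
    (integrable_fderiv_apply_mul_fderiv_apply hΩ (hw.of_le (by norm_num)) hg hgc hgΩ v)
    ((hpart.continuousOn.mul hg.continuous.continuousOn).integrable_of_support_subset hgc hgΩ
      ((support_mul_subset_right _ _).trans (subset_tsupport g)))
    (fun x hx => ?_) fun x _ => hg.differentiable one_ne_zero x
  exact (hpart.differentiableOn one_ne_zero).differentiableAt (hΩ.mem_nhds (hgΩ hx))

end IntegrationByParts

section Euclidean

variable {N : ℕ} {Ω : Set (EuclideanSpace ℝ (Fin N))} {w g : EuclideanSpace ℝ (Fin N) → ℝ}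

theorem gradient_apply (f : EuclideanSpace ℝ (Fin N) → ℝ) (x : EuclideanSpace ℝ (Fin N))
    (i : Fin N) : gradient f x i = fderiv ℝ f x (EuclideanSpace.single i 1) := by
  rw [← inner_gradient_left, real_inner_comm, EuclideanSpace.inner_single_left]
  simp

theorem sum_apply_single_mul_fderiv_apply_single (L : EuclideanSpace ℝ (Fin N) →L[ℝ] ℝ)
    (f : EuclideanSpace ℝ (Fin N) → ℝ) (x : EuclideanSpace ℝ (Fin N)) :
    ∑ i, L (EuclideanSpace.single i 1) * fderiv ℝ f x (EuclideanSpace.single i 1)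
      = L (gradient f x) := by
  conv_rhs => rw [← (EuclideanSpace.basisFun (Fin N) ℝ).sum_repr (gradient f x)]
  simp [gradient_apply, mul_comm]

theorem ContDiffOn.continuousOn_lap (hΩ : IsOpen Ω) (hw : ContDiffOn ℝ 2 w Ω) :
    ContinuousOn (lap w) Ω :=
  continuousOn_finsetSum _ fun i _ =>
    ((hw.contDiffOn_fderiv_apply hΩ (m := 1) (by norm_num) _).continuousOn_fderiv_of_isOpen hΩ
      le_rfl).clm_apply continuousOn_const

theorem integrable_fderiv_apply_gradient (hΩ : IsOpen Ω) (hw : ContDiffOn ℝ 1 w Ω)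
    (hg : ContDiff ℝ 1 g) (hgc : HasCompactSupport g) (hgΩ : tsupport g ⊆ Ω) :
    Integrable (fun x => fderiv ℝ g x (gradient w x)) := by
  refine ((hg.continuous_fderiv one_ne_zero).continuousOn.clm_apply
    (hw.continuousOn_gradient hΩ le_rfl)).integrable_of_support_subset hgc hgΩ fun x hx => ?_
  by_contra hxg
  simp [fderiv_of_notMem_tsupport (𝕜 := ℝ) hxg] at hx

theorem integrable_mul_lap (hΩ : IsOpen Ω) (hw : ContDiffOn ℝ 2 w Ω)
    (hg : Continuous g) (hgc : HasCompactSupport g) (hgΩ : tsupport g ⊆ Ω) :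
    Integrable (fun x => g x * lap w x) :=
  (hg.continuousOn.mul (hw.continuousOn_lap hΩ)).integrable_of_support_subset hgc hgΩ
    ((support_mul_subset_left _ _).trans (subset_tsupport g))

theorem integral_fderiv_apply_gradient_eq_neg_integral_mul_lap (hΩ : IsOpen Ω)
    (hw : ContDiffOn ℝ 2 w Ω) (hg : ContDiff ℝ 1 g) (hgc : HasCompactSupport g)
    (hgΩ : tsupport g ⊆ Ω) :
    ∫ x in Ω, fderiv ℝ g x (gradient w x) = -∫ x in Ω, g x * lap w x := by
  rw [setIntegral_eq_integral_of_forall_compl_eq_zero fun x hx => ?_,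
    setIntegral_eq_integral_of_forall_compl_eq_zero fun x hx => ?_]
  · calc ∫ x, fderiv ℝ g x (gradient w x)
        = ∑ i, ∫ x, fderiv ℝ w x (EuclideanSpace.single i 1)
            * fderiv ℝ g x (EuclideanSpace.single i 1) := by
          rw [← integral_finsetSum _ fun i _ => integrable_fderiv_apply_mul_fderiv_apply hΩ
            (hw.of_le (by norm_num)) hg hgc hgΩ _]
          simp_rw [← sum_apply_single_mul_fderiv_apply_single, mul_comm]
      _ = -∫ x, g x * lap w x := by
          simp_rw [integral_fderiv_apply_mul_fderiv_apply_eq_neg hΩ hw hg hgc hgΩ,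
            Finset.sum_neg_distrib]
          rw [← integral_finsetSum _ fun i _ =>
            integrable_fderiv_fderiv_apply_mul hΩ hw hg.continuous hgc hgΩ _]
          simp_rw [lap, Finset.mul_sum, mul_comm]
  · simp [image_eq_zero_of_notMem_tsupport fun h => hx (hgΩ h)]
  · simp [fderiv_of_notMem_tsupport (𝕜 := ℝ) fun h => hx (hgΩ h)]

theorem ground_state_lower_bound_of_neg_lap_ge (hΩ : IsOpen Ω) (hw : ContDiffOn ℝ 2 w Ω)
    (hwpos : ∀ x ∈ Ω, 0 < w x) {κ : ℝ} (hlap : ∀ x ∈ Ω, κ * w x ≤ -lap w x) {α : ℝ}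
    (hα : 0 ≤ α) {V : EuclideanSpace ℝ (Fin N) → ℝ}
    (hV : ∀ᵐ x ∂(volume.restrict Ω), α * (α - 1) * (‖gradient w x‖ / w x) ^ 2 ≤ V x)
    {φ : EuclideanSpace ℝ (Fin N) → ℝ} (hφ : ContDiff ℝ 1 φ) (hφc : HasCompactSupport φ)
    (hφΩ : tsupport φ ⊆ Ω)
    (hVφ : Integrable (fun x => V x * φ x ^ 2) (volume.restrict Ω)) :
    α * κ * ∫ x in Ω, φ x ^ 2
      ≤ (∫ x in Ω, ‖gradient φ x‖ ^ 2) + ∫ x in Ω, V x * φ x ^ 2 := by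
  set g := fun x => φ x ^ 2 / w x
  have hg : ContDiff ℝ 1 g :=
    hφ.sq_div_of_tsupport_subset hΩ hφΩ (hw.of_le (by norm_num)) fun x hx => (hwpos x hx).ne'
  have hgc : HasCompactSupport g := hφc.mono support_sq_div_subset
  have hgΩ : tsupport g ⊆ Ω := tsupport_sq_div_subset.trans hφΩ
  have hφ2 : Integrable (fun x => φ x ^ 2) :=
    (hφ.continuous.pow 2).integrable_of_hasCompactSupport (hφc.mono (support_pow φ two_ne_zero).le)
  have hdφ := hφ.integrable_norm_gradient_sq hφc (μ := volume)
  calc α * κ * ∫ x in Ω, φ x ^ 2 = ∫ x in Ω, α * (κ * φ x ^ 2) := by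
        rw [integral_const_mul, integral_const_mul, mul_assoc]
    _ ≤ ∫ x in Ω, -(α * (g x * lap w x)) := by
        refine setIntegral_mono_on (hφ2.const_mul _ |>.const_mul _).integrableOn
          ((integrable_mul_lap hΩ hw hg.continuous hgc hgΩ).const_mul α).neg.integrableOn
          hΩ.measurableSet fun x hx => ?_
        have hwx := hwpos x hx
        rw [← mul_neg, ← mul_neg]
        gcongr α * ?_
        calc κ * φ x ^ 2 = g x * (κ * w x) := by simp only [g]; field_simp
          _ ≤ g x * -lap w x := mul_le_mul_of_nonneg_left (hlap x hx) (by positivity)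
    _ = ∫ x in Ω, α * fderiv ℝ g x (gradient w x) := by
        rw [integral_neg, integral_const_mul, integral_const_mul,
          integral_fderiv_apply_gradient_eq_neg_integral_mul_lap hΩ hw hg hgc hgΩ, mul_neg]
    _ ≤ ∫ x in Ω, (‖gradient φ x‖ ^ 2 + V x * φ x ^ 2) := by
        have hD := integrable_fderiv_apply_gradient hΩ (hw.of_le (by norm_num)) hg hgc hgΩ
        refine integral_mono_ae (hD.restrict.const_mul α) (hdφ.restrict.add hVφ) ?_
        filter_upwards [hV, ae_restrict_mem hΩ.measurableSet] with x hVx hx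
        calc α * fderiv ℝ g x (gradient w x)
            ≤ ‖gradient φ x‖ ^ 2 + α * (α - 1) * (‖gradient w x‖ / w x) ^ 2 * φ x ^ 2 :=
              mul_fderiv_sq_div_apply_gradient_le (hφ.differentiable one_ne_zero x)
                ((hw.differentiableOn (by norm_num)).differentiableAt (hΩ.mem_nhds hx))
                (hwpos x hx) α
          _ ≤ ‖gradient φ x‖ ^ 2 + V x * φ x ^ 2 := by gcongr
    _ = _ := integral_add hdφ.restrict hVφ

end Euclidean

theorem integrable_mul_sq_of_le_of_nonpos {E : Type*} [NormedAddCommGroup E]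
    [InnerProductSpace ℝ E] [CompleteSpace E] [MeasurableSpace E] [OpensMeasurableSpace E]
    {μ : Measure E} [IsFiniteMeasureOnCompacts μ] {Ω : Set E} (hΩ : IsOpen Ω) {w : E → ℝ}
    (hw : ContDiffOn ℝ 1 w Ω) (hwpos : ∀ x ∈ Ω, 0 < w x) {c : ℝ} {V : E → ℝ}
    (hVmeas : AEStronglyMeasurable V (μ.restrict Ω))
    (hV : ∀ᵐ x ∂(μ.restrict Ω), c * (‖gradient w x‖ / w x) ^ 2 ≤ V x ∧ V x ≤ 0)
    {φ : E → ℝ} (hφ : Continuous φ) (hφc : HasCompactSupport φ) (hφΩ : tsupport φ ⊆ Ω) :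
    Integrable (fun x => V x * φ x ^ 2) (μ.restrict Ω) := by
  have hbound : Integrable (fun x => |c| * (‖gradient w x‖ / w x) ^ 2 * φ x ^ 2) μ :=
    ((continuousOn_const.mul (((hw.continuousOn_gradient hΩ le_rfl).norm.div hw.continuousOn
      fun x hx => (hwpos x hx).ne').pow 2)).mul (hφ.continuousOn.pow 2)
      ).integrable_of_support_subset hφc hφΩ ((support_mul_subset_right _ _).trans
        ((support_pow φ two_ne_zero).le.trans (subset_tsupport φ)))
  refine hbound.restrict.mono' (hVmeas.mul (hφ.pow 2).aestronglyMeasurable) ?_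
  filter_upwards [hV] with x ⟨hlower, hnonpos⟩
  rw [norm_mul, Real.norm_of_nonpos hnonpos, Real.norm_of_nonneg (sq_nonneg _)]
  refine mul_le_mul_of_nonneg_right ?_ (sq_nonneg _)
  nlinarith [neg_abs_le c, sq_nonneg (‖gradient w x‖ / w x)]

theorem IsLaneEmdenSolution.rpow_sub_two_mul_le_neg_lap {N : ℕ} {q : ℝ}
    {Ω : Set (EuclideanSpace ℝ (Fin N))} {w : EuclideanSpace ℝ (Fin N) → ℝ}
    (hw : IsLaneEmdenSolution q Ω w) (hq : q ≤ 2) {M : ℝ} (hwM : ∀ x ∈ Ω, w x ≤ M) :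
    ∀ x ∈ Ω, M ^ (q - 2) * w x ≤ -lap w x := by
  intro x hx
  have hwx := hw.2.1 x hx
  rw [hw.2.2 x hx, show q - 1 = q - 2 + 1 by ring, Real.rpow_add_one hwx.ne']
  exact mul_le_mul_of_nonneg_right (Real.rpow_le_rpow_of_nonpos hwx (hwM x hx) (by linarith))
    hwx.le

theorem ground_state_lower_bound_delta_general {N : ℕ}
    {q : ℝ} (hq2 : q < 2)
    {Ω : Set (EuclideanSpace ℝ (Fin N))} (hΩ : IsOpen Ω)
    {w : EuclideanSpace ℝ (Fin N) → ℝ} (hw : IsLaneEmdenSolution q Ω w)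
    {M : ℝ} (hwM : ∀ x ∈ Ω, w x ≤ M)
    {δ : ℝ} (hδ : 0 < δ)
    {V : EuclideanSpace ℝ (Fin N) → ℝ} (hVmeas : Measurable V)
    (hV : ∀ᵐ x ∂(volume.restrict Ω),
      (1 / δ) * (1 / δ - 1) * (‖gradient w x‖ / w x) ^ 2 ≤ V x ∧ V x ≤ 0)
    (φ : EuclideanSpace ℝ (Fin N) → ℝ) (hφ : ContDiff ℝ (⊤ : ℕ∞) φ)
    (hφc : HasCompactSupport φ) (hφΩ : tsupport φ ⊆ Ω) :
    (1 / δ) * M ^ (q - 2) * (∫ x in Ω, (φ x) ^ 2)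
      ≤ (∫ x in Ω, ‖gradient φ x‖ ^ 2) + ∫ x in Ω, V x * (φ x) ^ 2 := by
  have hφ1 : ContDiff ℝ 1 φ := hφ.of_le (by exact_mod_cast le_top)
  have hVφ := integrable_mul_sq_of_le_of_nonpos hΩ (hw.1.of_le (by norm_num)) hw.2.1
    hVmeas.aestronglyMeasurable hV hφ1.continuous hφc hφΩ
  exact ground_state_lower_bound_of_neg_lap_ge hΩ hw.1 hw.2.1
    (hw.rpow_sub_two_mul_le_neg_lap hq2.le hwM) (by positivity) (hV.mono fun x hx => hx.1)
    hφ1 hφc hφΩ hVφ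

/-- **Lower bound for the ground state energy**, general `δ` version: if
`0 ≥ V ≥ (1/δ)(1/δ - 1)|∇w/w|²` for a bounded Lane–Emden solution `w ≤ M`,
then the quadratic form is bounded below by `(1/δ) M^(q-2) ∫ φ²`. -/
theorem ground_state_lower_bound_delta {N : ℕ} (hN : 1 ≤ N)
    {q : ℝ} (hq1 : 1 ≤ q) (hq2 : q < 2)
    {Ω : Set (EuclideanSpace ℝ (Fin N))} (hΩ : IsOpen Ω)
    {w : EuclideanSpace ℝ (Fin N) → ℝ} (hw : IsLaneEmdenSolution q Ω w)
    {M : ℝ} (hM : 0 < M) (hwM : ∀ x ∈ Ω, w x ≤ M)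
    {δ : ℝ} (hδ : 0 < δ)
    {V : EuclideanSpace ℝ (Fin N) → ℝ} (hVmeas : Measurable V)
    (hV : ∀ᵐ x ∂(volume.restrict Ω),
      (1 / δ) * (1 / δ - 1) * (‖gradient w x‖ / w x) ^ 2 ≤ V x ∧ V x ≤ 0)
    (φ : EuclideanSpace ℝ (Fin N) → ℝ) (hφ : ContDiff ℝ (⊤ : ℕ∞) φ)
    (hφc : HasCompactSupport φ) (hφΩ : tsupport φ ⊆ Ω) :
    (1 / δ) * M ^ (q - 2) * (∫ x in Ω, (φ x) ^ 2)
      ≤ (∫ x in Ω, ‖gradient φ x‖ ^ 2) + ∫ x in Ω, V x * (φ x) ^ 2 :=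
  ground_state_lower_bound_delta_general hq2 hΩ hw hwM hδ hVmeas hV φ hφ hφc hφΩ
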